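/- arXiv:2311.18524 — 2 statements merged into one kernel-verified Lean document; each statement's English description precedes it below -/
import Mathlib

section
/- For a square binary matrix M ∈ {0,1}^{n×n} whose bipartite adjacency matrix A (of size 2n) has eigenvalues λ₁ ≥ ... ≥ λ_{2n}, and where Δ is the maximum number of 1 entries in any row or column of M, the semidefinite discrepancy satisfies pdisc(M) ≥ (1/Δ)·Σ_{i=2}^{n} λᵢ³. -/
open Finset

namespace Stmt6Aux


variable {N : ℕ}

noncomputable def sAux (a : Fin N → ℝ) (i : Fin N) : ℝ :=
  ∑ j ∈ univ.filter (fun j : Fin N => (j : ℕ) < (i : ℕ)), (a j) ^ 2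

noncomputable def rAux (a : Fin N → ℝ) (i : Fin N) : ℝ :=
  a i / Real.sqrt (sAux a i * (sAux a i + (a i) ^ 2))

noncomputable def gam (a : Fin N → ℝ) (i j : Fin N) : ℝ :=
  if a i = 0 then (if j = i then 1 else 0)
  else if sAux a i = 0 then (if (j : ℕ) = 0 then 1 else 0)
  else rAux a i * (if (j : ℕ) < (i : ℕ) then a j else if j = i then -(sAux a i) / a i else 0)

lemma sAux_nonneg (a : Fin N → ℝ) (i : Fin N) : 0 ≤ sAux a i :=
  Finset.sum_nonneg fun j _ => sq_nonneg _

lemma sAux_mem_zero (a : Fin N → ℝ) (i : Fin N) (h : sAux a i = 0) (j : Fin N)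
    (hj : (j : ℕ) < (i : ℕ)) : a j = 0 := by
  have := (Finset.sum_eq_zero_iff_of_nonneg (fun j _ => sq_nonneg (a j))).mp h j
    (by simpa using hj)
  exact pow_eq_zero_iff (by norm_num) |>.mp this

lemma gam_support (a : Fin N → ℝ) (i j : Fin N) (hi : 1 ≤ (i : ℕ)) (hj : (i : ℕ) < (j : ℕ)) :
    gam a i j = 0 := by
  have h1 : j ≠ i := by intro h; rw [h] at hj; omega
  have h2 : ¬ ((j : ℕ) = 0) := by omega
  have h3 : ¬ ((j : ℕ) < (i : ℕ)) := by omega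
  unfold gam
  simp [h1, h2, h3]

/-- split sum helper -/
lemma sum_split (i : Fin N) (f : Fin N → ℝ) (c : ℝ) :
    ∑ j : Fin N, (if (j : ℕ) < (i : ℕ) then f j else if j = i then c else 0)
      = (∑ j ∈ univ.filter (fun j : Fin N => (j : ℕ) < (i : ℕ)), f j) + c := by
  rw [← Finset.sum_filter_add_sum_filter_not univ (fun j : Fin N => (j : ℕ) < (i : ℕ))]
  congr 1
  · apply Finset.sum_congr rfl
    intro j hj
    simp only [mem_filter] at hj
    simp [hj.2]
  · rw [Finset.sum_congr rfl (g := fun j => if j = i then c else 0)]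
    · rw [Finset.sum_ite_eq' _ i fun _ => c]
      simp
    · intro j hj
      simp only [mem_filter, mem_univ, true_and] at hj
      simp [hj]

lemma gam_case3 (a : Fin N → ℝ) (i : Fin N) (h0 : a i ≠ 0) (hs : sAux a i ≠ 0) (f : Fin N → ℝ) :
    ∑ j, gam a i j * f j
      = rAux a i *
        ((∑ j ∈ univ.filter (fun j : Fin N => (j : ℕ) < (i : ℕ)), a j * f j)
          + (-(sAux a i) / a i) * f i) := by
  rw [← sum_split i (fun j => a j * f j) _, Finset.mul_sum]
  apply Finset.sum_congr rfl
  intro j _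
  unfold gam
  simp only [h0, hs, if_false]
  by_cases h : (j : ℕ) < (i : ℕ)
  · simp [h]; ring
  · by_cases h2 : j = i
    · subst h2; simp [h]; ring
    · simp [h, h2]

lemma gam_dot (a : Fin N → ℝ) (i : Fin N) (hi : 1 ≤ (i : ℕ)) (g : Fin N → ℝ) (c : ℝ)
    (hg : ∀ j : Fin N, (j : ℕ) ≤ (i : ℕ) → g j = c * a j) :
    ∑ j, gam a i j * g j = 0 := by
  by_cases h0 : a i = 0
  · unfold gam
    simp only [h0, if_true]
    rw [Finset.sum_congr rfl (g := fun j => if j = i then g i else 0)]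
    · rw [Finset.sum_ite_eq' _ i fun _ => g i]
      simp [hg i le_rfl, h0]
    · intro j _; by_cases h : j = i
      · subst h; simp
      · simp [h]
  · by_cases hs : sAux a i = 0
    · unfold gam
      simp only [h0, if_false, hs, if_true]
      have h0N : 0 < N := i.pos
      have hco : ∀ j : Fin N, ((j : ℕ) = 0) ↔ j = (⟨0, h0N⟩ : Fin N) := by
        intro j; constructor <;> intro h
        · exact Fin.ext h
        · rw [h]
      rw [Finset.sum_congr rfl (g := fun j => if j = (⟨0, h0N⟩ : Fin N) then g j else 0)]
      · rw [Finset.sum_ite_eq' _ _ fun j => g j]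
        simp only [mem_univ, if_true]
        rw [hg _ (by simp), sAux_mem_zero a i hs ⟨0, h0N⟩ (by show 0 < (i:ℕ); omega)]
        ring
      · intro j _
        by_cases h : (j : ℕ) = 0
        · simp [h, (hco j).mp h]
        · rw [if_neg h, if_neg (fun hh => h ((hco j).mpr hh))]; simp
    · rw [gam_case3 a i h0 hs g]
      have h1 : ∀ j ∈ univ.filter (fun j : Fin N => (j : ℕ) < (i : ℕ)),
          a j * g j = c * (a j) ^ 2 := by
        intro j hj
        simp only [mem_filter] at hj
        rw [hg j (by omega)]
        ring
      rw [Finset.sum_congr rfl h1, hg i le_rfl, ← Finset.mul_sum]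
      have h2 : ∑ j ∈ univ.filter (fun j : Fin N => (j : ℕ) < (i : ℕ)), (a j) ^ 2 = sAux a i := rfl
      rw [h2]
      field_simp
      ring

lemma gam_norm (a : Fin N → ℝ) (i : Fin N) (hi : 1 ≤ (i : ℕ)) :
    ∑ j, gam a i j * gam a i j = 1 := by
  by_cases h0 : a i = 0
  · unfold gam
    simp only [h0, if_true]
    rw [Finset.sum_congr rfl (g := fun j => if j = i then 1 else 0)]
    · rw [Finset.sum_ite_eq' _ i fun _ => (1:ℝ)]; simp
    · intro j _; by_cases h : j = i <;> simp [h]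
  · by_cases hs : sAux a i = 0
    · unfold gam
      simp only [h0, if_false, hs, if_true]
      have h0N : 0 < N := i.pos
      have hco : ∀ j : Fin N, ((j : ℕ) = 0) ↔ j = (⟨0, h0N⟩ : Fin N) := by
        intro j; constructor <;> intro h
        · exact Fin.ext h
        · rw [h]
      rw [Finset.sum_congr rfl (g := fun j => if j = (⟨0, h0N⟩ : Fin N) then 1 else 0)]
      · rw [Finset.sum_ite_eq' _ _ fun _ => (1:ℝ)]; simp
      · intro j _
        by_cases h : (j : ℕ) = 0
        · simp [h, (hco j).mp h]
        · rw [if_neg h, if_neg (fun hh => h ((hco j).mpr hh))]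
          simp [h]
    · rw [gam_case3 a i h0 hs (gam a i)]
      have hsp : 0 < sAux a i := lt_of_le_of_ne (sAux_nonneg a i) (Ne.symm hs)
      have hgj : ∀ j ∈ univ.filter (fun j : Fin N => (j : ℕ) < (i : ℕ)),
          a j * gam a i j = rAux a i * (a j) ^ 2 := by
        intro j hj
        simp only [mem_filter] at hj
        unfold gam
        simp only [h0, hs, if_false, hj.2, if_true]
        ring
      have hgi : gam a i i = rAux a i * (-(sAux a i) / a i) := by
        unfold gam
        simp [h0, hs]
      rw [Finset.sum_congr rfl hgj, hgi, ← Finset.mul_sum]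
      have h2 : ∑ j ∈ univ.filter (fun j : Fin N => (j : ℕ) < (i : ℕ)), (a j) ^ 2 = sAux a i := rfl
      rw [h2]
      have hpos : 0 < sAux a i * (sAux a i + (a i) ^ 2) := by
        apply mul_pos hsp
        nlinarith [sq_nonneg (a i)]
      have hsq : Real.sqrt (sAux a i * (sAux a i + (a i) ^ 2)) ^ 2
          = sAux a i * (sAux a i + (a i) ^ 2) := Real.sq_sqrt hpos.le
      have hr2 : rAux a i ^ 2 = (a i) ^ 2 / (sAux a i * (sAux a i + (a i) ^ 2)) := by
        rw [rAux, div_pow, hsq]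
      have e1 : rAux a i * (rAux a i * sAux a i
            + -sAux a i / a i * (rAux a i * (-sAux a i / a i)))
          = rAux a i ^ 2 * (sAux a i + sAux a i ^ 2 / (a i) ^ 2) := by ring
      rw [e1, hr2]
      field_simp
      ring

lemma gam_orth (a : Fin N → ℝ) (i i' : Fin N) (hi : 1 ≤ (i : ℕ)) (hii' : (i : ℕ) < (i' : ℕ)) :
    ∑ j, gam a i j * gam a i' j = 0 := by
  by_cases h0 : a i' = 0
  · rw [Finset.sum_congr rfl (g := fun j => if j = i' then gam a i j else 0)]
    · rw [Finset.sum_ite_eq' _ i' fun j => gam a i j]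
      simp [gam_support a i i' hi hii']
    · intro j _
      have hg : gam a i' j = if j = i' then 1 else 0 := by unfold gam; simp [h0]
      rw [hg]
      by_cases h : j = i'
      · subst h; simp
      · simp [h]
  · by_cases hs : sAux a i' = 0
    · have hai : a i = 0 := sAux_mem_zero a i' hs i hii'
      have hgi : ∀ j : Fin N, gam a i j = if j = i then 1 else 0 := by
        intro j; unfold gam; simp [hai]
      rw [Finset.sum_congr rfl (g := fun j => if j = i then gam a i' j else 0)]
      · rw [Finset.sum_ite_eq' _ i fun j => gam a i' j]
        simp only [mem_univ, if_true]
        unfold gam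
        simp only [h0, if_false, hs, if_true]
        rw [if_neg (by omega)]
      · intro j _
        rw [hgi j]
        by_cases h : j = i
        · subst h; simp
        · simp [h]
    · apply gam_dot a i hi (gam a i') (rAux a i')
      intro j hj
      unfold gam
      simp only [h0, hs, if_false]
      rw [if_pos (by omega)]

lemma gam_eig (a : Fin N → ℝ) (lam : Fin N → ℝ) (hdecr : Antitone lam) (i : Fin N)
    (hi : 1 ≤ (i : ℕ)) :
    lam i ≤ ∑ j, gam a i j * gam a i j * lam j := by
  have key : ∀ j : Fin N, gam a i j * gam a i j * lam i ≤ gam a i j * gam a i j * lam j := by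
    intro j
    by_cases h : (i : ℕ) < (j : ℕ)
    · rw [gam_support a i j hi h]; simp
    · have : lam i ≤ lam j := hdecr (by rwa [Fin.le_def, ← not_lt])
      nlinarith [sq_nonneg (gam a i j), this]
  calc lam i = (∑ j, gam a i j * gam a i j) * lam i := by rw [gam_norm a i hi]; ring
    _ = ∑ j, gam a i j * gam a i j * lam i := by rw [Finset.sum_mul]
    _ ≤ _ := Finset.sum_le_sum fun j _ => key j


/-- cube is monotone -/
lemma cube_le {x y : ℝ} (h : x ≤ y) : x ^ 3 ≤ y ^ 3 := by
  nlinarith [sq_nonneg (x + y), sq_nonneg (x - y), sq_nonneg x, sq_nonneg y]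

/-- expanding a dot product of two combinations of an orthonormal family -/
lemma dot_expand {κ τ : Type*} [Fintype κ] [Fintype τ] [DecidableEq κ] (s : Finset κ) (u : κ → τ → ℝ)
    (h : ∀ i ∈ s, ∀ j ∈ s, (∑ x, u i x * u j x) = if i = j then (1 : ℝ) else 0)
    (γ δ' : κ → ℝ) :
    ∑ x, (∑ i ∈ s, γ i * u i x) * (∑ j ∈ s, δ' j * u j x) = ∑ i ∈ s, γ i * δ' i := by
  have step : ∀ x : τ, (∑ i ∈ s, γ i * u i x) * (∑ j ∈ s, δ' j * u j x)
      = ∑ i ∈ s, ∑ j ∈ s, (γ i * δ' j) * (u i x * u j x) := by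
    intro x
    rw [Finset.sum_mul_sum]
    apply Finset.sum_congr rfl; intro i _
    apply Finset.sum_congr rfl; intro j _
    ring
  rw [Finset.sum_congr rfl fun x _ => step x]
  rw [Finset.sum_comm]
  apply Finset.sum_congr rfl
  intro i hi
  rw [Finset.sum_comm]
  have : ∀ j ∈ s, ∑ x, (γ i * δ' j) * (u i x * u j x) = (γ i * δ' j) * (if i = j then (1:ℝ) else 0) := by
    intro j hj
    rw [← Finset.mul_sum, h i hi j hj]
  rw [Finset.sum_congr rfl this]
  rw [Finset.sum_congr rfl (g := fun j => if j = i then γ i * δ' i else 0)]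
  · rw [Finset.sum_ite_eq' s i fun _ => γ i * δ' i]
    simp [hi]
  · intro j _
    by_cases hji : j = i
    · subst hji; simp
    · simp [hji, Ne.symm hji]

/-- expanding a quadratic form whose matrix has a spectral representation -/
lemma quad_expand {κ τ : Type*} [Fintype κ] [Fintype τ] (B : τ → τ → ℝ) (d : κ → ℝ)
    (u : κ → τ → ℝ) (hrep : ∀ a b, B a b = ∑ j, d j * (u j a * u j b)) (x : τ → ℝ) :
    ∑ a, x a * (∑ b, B a b * x b) = ∑ j, d j * (∑ a, x a * u j a) ^ 2 := by
  have key : ∀ a b, x a * (B a b * x b)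
      = ∑ j, d j * ((x a * u j a) * (x b * u j b)) := by
    intro a b
    rw [hrep a b, Finset.sum_mul, Finset.mul_sum]
    apply Finset.sum_congr rfl; intro j _; ring
  calc ∑ a, x a * (∑ b, B a b * x b)
      = ∑ a, ∑ b, x a * (B a b * x b) := by
        apply Finset.sum_congr rfl; intro a _; rw [Finset.mul_sum]
    _ = ∑ a, ∑ b, ∑ j, d j * ((x a * u j a) * (x b * u j b)) := by
        apply Finset.sum_congr rfl; intro a _
        exact Finset.sum_congr rfl fun b _ => key a b
    _ = ∑ a, ∑ j, ∑ b, d j * ((x a * u j a) * (x b * u j b)) := by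
        apply Finset.sum_congr rfl; intro a _
        rw [Finset.sum_comm]
    _ = ∑ j, ∑ a, ∑ b, d j * ((x a * u j a) * (x b * u j b)) := by
        rw [Finset.sum_comm]
    _ = ∑ j, d j * (∑ a, x a * u j a) ^ 2 := by
        apply Finset.sum_congr rfl; intro j _
        simp only [← Finset.mul_sum]
        congr 1
        rw [sq, ← Finset.sum_mul]

/-- spectral extraction over ℝ -/
lemma spectral_extract {m : Type*} [Fintype m] [DecidableEq m] (B : Matrix m m ℝ)
    (hB : B.IsHermitian) :
    ∃ (μ : m → ℝ) (w : m → m → ℝ),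
      (∀ k a, (∑ b, B a b * w k b) = μ k * w k a) ∧
      (∀ k l, (∑ a, w k a * w l a) = if k = l then (1:ℝ) else 0) ∧
      (∀ a b, (∑ k, w k a * w k b) = if a = b then (1:ℝ) else 0) := by
  refine ⟨hB.eigenvalues, fun k a => (hB.eigenvectorUnitary : Matrix m m ℝ) a k, ?_, ?_, ?_⟩
  · intro k
    have hsp := hB.spectral_theorem
    have hU := (Matrix.mem_unitaryGroup_iff').mp (hB.eigenvectorUnitary).2
    have hBU : B * (hB.eigenvectorUnitary : Matrix m m ℝ)
        = (hB.eigenvectorUnitary : Matrix m m ℝ) * Matrix.diagonal (RCLike.ofReal ∘ hB.eigenvalues) := by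
      calc B * (hB.eigenvectorUnitary : Matrix m m ℝ)
          = ((hB.eigenvectorUnitary : Matrix m m ℝ) * Matrix.diagonal (RCLike.ofReal ∘ hB.eigenvalues)
            * star (hB.eigenvectorUnitary : Matrix m m ℝ)) * (hB.eigenvectorUnitary : Matrix m m ℝ) := by
            rw [Unitary.conjStarAlgAut_apply] at hsp
            rw [← hsp]
        _ = _ := by rw [Matrix.mul_assoc, hU, Matrix.mul_one]
    intro a
    have := congrFun (congrFun hBU a) k
    simp only [Matrix.mul_apply, Matrix.diagonal_apply, Function.comp] at this
    rw [Finset.sum_congr rfl (g := fun b => B a b * (hB.eigenvectorUnitary : Matrix m m ℝ) b k)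
      (fun b _ => rfl), this]
    simp [Finset.sum_ite_eq, mul_comm]
  · intro k l
    have h := (Matrix.mem_unitaryGroup_iff').mp (hB.eigenvectorUnitary).2
    have := congrFun (congrFun h k) l
    simpa [Matrix.mul_apply, Matrix.one_apply, Matrix.star_apply, mul_comm] using this
  · intro a b
    have h := (Matrix.mem_unitaryGroup_iff).mp (hB.eigenvectorUnitary).2
    have := congrFun (congrFun h a) b
    simpa [Matrix.mul_apply, Matrix.one_apply, Matrix.star_apply] using this

/-- expansion against a complete orthonormal system -/
lemma expand_complete {τ : Type*} [Fintype τ] [DecidableEq τ] (u : τ → τ → ℝ)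
    (hcomp : ∀ a b, (∑ k, u k a * u k b) = if a = b then (1:ℝ) else 0) (g : τ → ℝ) (y : τ) :
    ∑ k, (∑ c, g c * u k c) * u k y = g y := by
  calc ∑ k, (∑ c, g c * u k c) * u k y
      = ∑ k, ∑ c, g c * (u k c * u k y) := by
        apply Finset.sum_congr rfl; intro k _
        rw [Finset.sum_mul]
        apply Finset.sum_congr rfl; intro c _; ring
    _ = ∑ c, g c * (∑ k, u k c * u k y) := by
        rw [Finset.sum_comm]
        apply Finset.sum_congr rfl; intro c _
        rw [← Finset.mul_sum]
    _ = g y := by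
        rw [Finset.sum_congr rfl (g := fun c => if c = y then g y else 0)]
        · rw [Finset.sum_ite_eq' _ y fun _ => g y]; simp
        · intro c _
          rw [hcomp c y]
          by_cases h : c = y
          · subst h; simp
          · simp [h]

end Stmt6Aux



/-- Symmetrization: the adjacency matrix `[[0, M],[Mᵀ, 0]]` of the bipartite graph of `M`. -/
noncomputable def symA {n : ℕ} (M : Matrix (Fin n) (Fin n) ℝ) :
    Matrix (Fin n ⊕ Fin n) (Fin n ⊕ Fin n) ℝ :=
  Matrix.fromBlocks 0 M M.transpose 0

/-- The adjacency matrix of the complete bipartite graph `K_{n,n}`. -/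
noncomputable def Lmat (n : ℕ) : Matrix (Fin n ⊕ Fin n) (Fin n ⊕ Fin n) ℝ :=
  symA (Matrix.of fun _ _ => (1 : ℝ))

/-- Frobenius inner product. -/
noncomputable def frob {n : ℕ} (X Y : Matrix (Fin n ⊕ Fin n) (Fin n ⊕ Fin n) ℝ) : ℝ :=
  ∑ k, ∑ l, X k l * Y k l

/-- Density `p = |M|/n²`. -/
noncomputable def dens {n : ℕ} (M : Matrix (Fin n) (Fin n) ℝ) : ℝ :=
  (∑ i, ∑ j, M i j) / (n * n)

/-- `disc(X) = ⟨X,A⟩ - p⟨X,L⟩` for the SDP relaxation. -/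
noncomputable def discX {n : ℕ} (M : Matrix (Fin n) (Fin n) ℝ)
    (X : Matrix (Fin n ⊕ Fin n) (Fin n ⊕ Fin n) ℝ) : ℝ :=
  frob X (symA M) - dens M * frob X (Lmat n)


/-- `pdisc(M) ≥ (1/Δ)·Σ_{i=2}^{n} λᵢ³`: there is a symmetric PSD matrix `X` with diagonal
entries at most 1 witnessing this discrepancy. -/
theorem stmt6 (n : ℕ) (hn : 0 < n)
    (M : Matrix (Fin n) (Fin n) ℝ) (hbin : ∀ i j, M i j = 0 ∨ M i j = 1)
    (lam : Fin (n + n) → ℝ) (v : Fin (n + n) → (Fin n ⊕ Fin n) → ℝ)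
    (hdecr : Antitone lam)
    (horth : ∀ i j, (∑ k, v i k * v j k) = if i = j then (1 : ℝ) else 0)
    (heig : ∀ i, (symA M).mulVec (v i) = lam i • v i)
    (Δ : ℝ)
    (hΔ : Δ = univ.sup' ⟨(⟨0, hn⟩ : Fin n), mem_univ _⟩
      (fun i => max (∑ j, M i j) (∑ j, M j i))) :
    ∃ X : Matrix (Fin n ⊕ Fin n) (Fin n ⊕ Fin n) ℝ,
      X.PosSemidef ∧ (∀ k, X k k ≤ 1) ∧
      discX M X ≥ (1 / Δ) * ∑ i ∈ univ.filter (fun i : Fin (n + n) => 1 ≤ (i : ℕ) ∧ (i : ℕ) < n),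
        lam i ^ 3 := by
  classical
  have hM0 : ∀ i j, 0 ≤ M i j := by
    intro i j; rcases hbin i j with h | h <;> rw [h] <;> norm_num
  have hM1 : ∀ i j, M i j ≤ 1 := by
    intro i j; rcases hbin i j with h | h <;> rw [h] <;> norm_num
  have hMsq : ∀ i j, M i j ^ 2 = M i j := by
    intro i j; rcases hbin i j with h | h <;> rw [h] <;> norm_num
  have hΔrow : ∀ i, (∑ j, M i j) ≤ Δ := by
    intro i; rw [hΔ]
    exact le_trans (le_max_left _ _) (Finset.le_sup' (fun i => max (∑ j, M i j) (∑ j, M j i)) (mem_univ i))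
  have hΔcol : ∀ i, (∑ j, M j i) ≤ Δ := by
    intro i; rw [hΔ]
    exact le_trans (le_max_right _ _) (Finset.le_sup' (fun i => max (∑ j, M i j) (∑ j, M j i)) (mem_univ i))
  have hΔ0 : 0 ≤ Δ :=
    le_trans (Finset.sum_nonneg fun j _ => hM0 ⟨0, hn⟩ j) (hΔrow ⟨0, hn⟩)
  set p : ℝ := dens M with hpdef
  have hp0 : 0 ≤ p := by
    apply div_nonneg
    · exact Finset.sum_nonneg fun i _ => Finset.sum_nonneg fun j _ => hM0 i j
    · positivity
  have hMsum : (∑ i, ∑ j, M i j) = p * (n * n) := by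
    rw [hpdef]; unfold _root_.dens
    field_simp
  have hp1 : p ≤ 1 := by
    rw [hpdef]; unfold _root_.dens
    rw [div_le_one (by positivity : (0:ℝ) < (n:ℝ) * n)]
    calc (∑ i, ∑ j, M i j) ≤ ∑ i : Fin n, ∑ j : Fin n, (1:ℝ) :=
          Finset.sum_le_sum fun i _ => Finset.sum_le_sum fun j _ => hM1 i j
      _ = (n : ℝ) * n := by simp
  have hnp : (n : ℝ) * p ≤ Δ := by
    have h1 : (∑ i, ∑ j, M i j) ≤ (n : ℝ) * Δ := by
      calc (∑ i, ∑ j, M i j) ≤ ∑ _i : Fin n, Δ := Finset.sum_le_sum fun i _ => hΔrow i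
        _ = (n : ℝ) * Δ := by simp [mul_comm]
    have hn' : (0:ℝ) < (n:ℝ) := by exact_mod_cast hn
    nlinarith [hMsum]
  by_cases hΔz : Δ = 0
  · refine ⟨0, Matrix.PosSemidef.zero, by intro k; simp, ?_⟩
    rw [hΔz]
    simp [discX, frob]
  have hΔpos : 0 < Δ := lt_of_le_of_ne hΔ0 (Ne.symm hΔz)
  -- the matrix B = A - p L
  set Bm : Matrix (Fin n ⊕ Fin n) (Fin n ⊕ Fin n) ℝ :=
    Matrix.of (fun k l => symA M k l - p * Lmat n k l) with hBmdef
  have hBmval : ∀ k l, Bm k l = symA M k l - p * Lmat n k l := fun k l => rfl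
  have hsymAs : ∀ k l, symA M l k = symA M k l := by
    intro k l
    rcases k with i | i <;> rcases l with j | j <;> simp [symA]
  have hLsym : ∀ k l, Lmat n l k = Lmat n k l := by
    intro k l
    rcases k with i | i <;> rcases l with j | j <;> simp [Lmat, symA]
  have hBsymm : Bm.IsHermitian := by
    have : Bm.conjTranspose = Bm := by
      ext k l
      simp only [Matrix.conjTranspose_apply, star_trivial, hBmval, hsymAs, hLsym]
    exact this
  obtain ⟨μ, w, hweig, hworth, hwcomp⟩ := Stmt6Aux.spectral_extract Bm hBsymm
  have hBrep : ∀ x y, Bm x y = ∑ k, μ k * (w k x * w k y) := by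
    intro x y
    symm
    calc ∑ k, μ k * (w k x * w k y)
        = ∑ k, (∑ b, Bm x b * w k b) * w k y := by
          apply Finset.sum_congr rfl; intro k _
          rw [hweig k x]; ring
      _ = Bm x y := Stmt6Aux.expand_complete w hwcomp (fun b => Bm x b) y
  -- diagonal bound for B²
  have hB2 : ∀ x, (∑ b, Bm x b ^ 2) ≤ Δ := by
    have harith : ∀ d : ℝ, 0 ≤ d → d ≤ Δ → d - 2*p*d + (n:ℝ)*p^2 ≤ Δ := by
      intro d hd0 hdΔ
      nlinarith [mul_nonneg (sub_nonneg.2 hdΔ) (sub_nonneg.2 hp1), mul_nonneg hd0 hp0,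
        mul_nonneg hp0 (sub_nonneg.2 hnp)]
    have hexp : ∀ f : Fin n → ℝ, (∀ j, f j ^ 2 = f j) →
        (∑ j, (f j - p)^2) = (∑ j, f j) - 2*p*(∑ j, f j) + (n:ℝ)*p^2 := by
      intro f hf
      have : ∀ j : Fin n, (f j - p)^2 = f j - 2*p*f j + p^2 := by
        intro j
        rw [sub_sq, hf j]; ring
      rw [Finset.sum_congr rfl fun j _ => this j]
      rw [Finset.sum_add_distrib, Finset.sum_sub_distrib, ← Finset.mul_sum, Finset.sum_const]
      simp [Finset.card_univ, mul_comm]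
    intro x
    rcases x with i | i
    · have hL : ∀ j : Fin n, Bm (Sum.inl i) (Sum.inr j) = M i j - p := by
        intro j; rw [hBmval]; simp [symA, Lmat]
      have hzero : ∀ i' : Fin n, Bm (Sum.inl i) (Sum.inl i') = 0 := by
        intro i'; rw [hBmval]; simp [symA, Lmat]
      rw [Fintype.sum_sum_type]
      simp only [hL, hzero]
      simp only [ne_eq, OfNat.ofNat_ne_zero, not_false_eq_true, zero_pow, Finset.sum_const_zero,
        zero_add]
      rw [hexp (fun j => M i j) (fun j => hMsq i j)]
      exact harith _ (Finset.sum_nonneg fun j _ => hM0 i j) (hΔrow i)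
    · have hL : ∀ j : Fin n, Bm (Sum.inr i) (Sum.inl j) = M j i - p := by
        intro j; rw [hBmval]; simp [symA, Lmat]
      have hzero : ∀ i' : Fin n, Bm (Sum.inr i) (Sum.inr i') = 0 := by
        intro i'; rw [hBmval]; simp [symA, Lmat]
      rw [Fintype.sum_sum_type]
      simp only [hL, hzero]
      simp only [ne_eq, OfNat.ofNat_ne_zero, not_false_eq_true, zero_pow, Finset.sum_const_zero,
        add_zero]
      rw [hexp (fun j => M j i) (fun j => hMsq j i)]
      exact harith _ (Finset.sum_nonneg fun j _ => hM0 j i) (hΔcol i)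
  have hB2diag : ∀ x, ∑ k, (μ k)^2 * (w k x)^2 = ∑ b, Bm x b ^ 2 := by
    intro x
    have h := Stmt6Aux.dot_expand univ w (fun i _ j _ => hworth i j)
      (fun k => μ k * w k x) (fun k => μ k * w k x)
    calc ∑ k, (μ k)^2 * (w k x)^2
        = ∑ k, (μ k * w k x) * (μ k * w k x) := by
          apply Finset.sum_congr rfl; intro k _; ring
      _ = ∑ b, (∑ k, (μ k * w k x) * w k b) * (∑ l, (μ l * w l x) * w l b) := h.symm
      _ = ∑ b, Bm x b ^ 2 := by
          apply Finset.sum_congr rfl; intro b _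
          have e : Bm x b = ∑ k, (μ k * w k x) * w k b := by
            rw [hBrep x b]
            apply Finset.sum_congr rfl; intro k _; ring
          rw [← e, sq]
  -- the z vectors
  set a : Fin (n + n) → ℝ := fun j => ∑ k, v j k with hadef
  set z : Fin (n + n) → (Fin n ⊕ Fin n) → ℝ :=
    fun i k => ∑ j, Stmt6Aux.gam a i j * v j k with hzdef
  set I : Finset (Fin (n + n)) :=
    univ.filter (fun i : Fin (n + n) => 1 ≤ (i : ℕ) ∧ (i : ℕ) < n) with hIdef
  have hI1 : ∀ i ∈ I, 1 ≤ (i : ℕ) := by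
    intro i hi; rw [hIdef] at hi; simp only [mem_filter] at hi; exact hi.2.1
  have hzdot : ∀ i i', (∑ k, z i k * z i' k) = ∑ j, Stmt6Aux.gam a i j * Stmt6Aux.gam a i' j := by
    intro i i'
    exact Stmt6Aux.dot_expand univ v (fun i _ j _ => horth i j) _ _
  have hzorthI : ∀ i ∈ I, ∀ i' ∈ I, (∑ k, z i k * z i' k) = if i = i' then (1:ℝ) else 0 := by
    intro i hi i' hi'
    rw [hzdot i i']
    by_cases h : i = i'
    · subst h
      rw [if_pos rfl]
      exact Stmt6Aux.gam_norm a i (hI1 i hi)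
    · rw [if_neg h]
      have hne : (i : ℕ) ≠ (i' : ℕ) := fun hh => h (Fin.ext hh)
      rcases lt_or_gt_of_ne hne with hlt | hgt
      · exact Stmt6Aux.gam_orth a i i' (hI1 i hi) hlt
      · rw [Finset.sum_congr rfl
          (g := fun j => Stmt6Aux.gam a i' j * Stmt6Aux.gam a i j) (fun j _ => mul_comm _ _)]
        exact Stmt6Aux.gam_orth a i' i (hI1 i' hi') hgt
  have hzsum : ∀ i ∈ I, (∑ k, z i k) = 0 := by
    intro i hi
    have : (∑ k, z i k) = ∑ j, Stmt6Aux.gam a i j * a j := by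
      rw [hzdef]
      simp only
      rw [Finset.sum_comm]
      apply Finset.sum_congr rfl; intro j _
      rw [← Finset.mul_sum]
    rw [this]
    exact Stmt6Aux.gam_dot a i (hI1 i hi) a 1 (fun j _ => (one_mul _).symm)
  have hmulvec : ∀ j k, (∑ l, symA M k l * v j l) = lam j * v j k := by
    intro j k
    have := congrFun (heig j) k
    rw [Matrix.mulVec, dotProduct] at this
    rw [this]
    simp
  have hzA : ∀ i ∈ I, lam i ≤ ∑ k, z i k * (∑ l, symA M k l * z i l) := by
    intro i hi
    have hinner : ∀ k, (∑ l, symA M k l * z i l)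
        = ∑ j, (Stmt6Aux.gam a i j * lam j) * v j k := by
      intro k
      rw [hzdef]
      simp only
      calc ∑ l, symA M k l * ∑ j, Stmt6Aux.gam a i j * v j l
          = ∑ l, ∑ j, Stmt6Aux.gam a i j * (symA M k l * v j l) := by
            apply Finset.sum_congr rfl; intro l _
            rw [Finset.mul_sum]
            apply Finset.sum_congr rfl; intro j _; ring
        _ = ∑ j, Stmt6Aux.gam a i j * (∑ l, symA M k l * v j l) := by
            rw [Finset.sum_comm]
            apply Finset.sum_congr rfl; intro j _
            rw [← Finset.mul_sum]
        _ = ∑ j, (Stmt6Aux.gam a i j * lam j) * v j k := by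
            apply Finset.sum_congr rfl; intro j _
            rw [hmulvec j k]; ring
    have hquad : (∑ k, z i k * (∑ l, symA M k l * z i l))
        = ∑ j, Stmt6Aux.gam a i j * (Stmt6Aux.gam a i j * lam j) := by
      rw [Finset.sum_congr rfl (fun k _ => by rw [hinner k])]
      exact Stmt6Aux.dot_expand univ v (fun i _ j _ => horth i j) _ _
    rw [hquad]
    calc lam i ≤ ∑ j, Stmt6Aux.gam a i j * Stmt6Aux.gam a i j * lam j :=
          Stmt6Aux.gam_eig a lam hdecr i (hI1 i hi)
      _ = _ := by apply Finset.sum_congr rfl; intro j _; ring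
  have hzL : ∀ i ∈ I, (∑ k, z i k * (∑ l, Lmat n k l * z i l)) ≤ 0 := by
    intro i hi
    have hLrow1 : ∀ x : Fin n, (∑ l, Lmat n (Sum.inl x) l * z i l) = ∑ y, z i (Sum.inr y) := by
      intro x
      rw [Fintype.sum_sum_type]
      have h1 : ∀ y : Fin n, Lmat n (Sum.inl x) (Sum.inl y) = 0 := by
        intro y; simp [Lmat, symA]
      have h2 : ∀ y : Fin n, Lmat n (Sum.inl x) (Sum.inr y) = 1 := by
        intro y; simp [Lmat, symA]
      simp [h1, h2]
    have hLrow2 : ∀ x : Fin n, (∑ l, Lmat n (Sum.inr x) l * z i l) = ∑ y, z i (Sum.inl y) := by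
      intro x
      rw [Fintype.sum_sum_type]
      have h1 : ∀ y : Fin n, Lmat n (Sum.inr x) (Sum.inr y) = 0 := by
        intro y; simp [Lmat, symA]
      have h2 : ∀ y : Fin n, Lmat n (Sum.inr x) (Sum.inl y) = 1 := by
        intro y; simp [Lmat, symA]
      simp [h1, h2]
    have hsplit : (∑ y : Fin n, z i (Sum.inl y)) + (∑ y : Fin n, z i (Sum.inr y)) = 0 := by
      rw [← Fintype.sum_sum_type]
      exact hzsum i hi
    calc (∑ k, z i k * (∑ l, Lmat n k l * z i l))
        = (∑ x : Fin n, z i (Sum.inl x) * (∑ y, z i (Sum.inr y)))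
          + (∑ x : Fin n, z i (Sum.inr x) * (∑ y, z i (Sum.inl y))) := by
          rw [Fintype.sum_sum_type]
          congr 1
          · exact Finset.sum_congr rfl fun x _ => by rw [hLrow1 x]
          · exact Finset.sum_congr rfl fun x _ => by rw [hLrow2 x]
      _ = 2 * ((∑ y : Fin n, z i (Sum.inl y)) * (∑ y : Fin n, z i (Sum.inr y))) := by
          rw [← Finset.sum_mul, ← Finset.sum_mul]
          ring
      _ ≤ 0 := by
          have hneg : (∑ y : Fin n, z i (Sum.inr y)) = -(∑ y : Fin n, z i (Sum.inl y)) := by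
            linarith
          rw [hneg]
          nlinarith [sq_nonneg (∑ y : Fin n, z i (Sum.inl y))]
  have hzB : ∀ i ∈ I, lam i ≤ ∑ k, z i k * (∑ l, Bm k l * z i l) := by
    intro i hi
    have hsplit : (∑ k, z i k * (∑ l, Bm k l * z i l))
        = (∑ k, z i k * (∑ l, symA M k l * z i l))
          - p * (∑ k, z i k * (∑ l, Lmat n k l * z i l)) := by
      rw [Finset.mul_sum, ← Finset.sum_sub_distrib]
      apply Finset.sum_congr rfl; intro k _
      have : (∑ l, Bm k l * z i l)
          = (∑ l, symA M k l * z i l) - p * (∑ l, Lmat n k l * z i l) := by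
        rw [Finset.mul_sum, ← Finset.sum_sub_distrib]
        apply Finset.sum_congr rfl; intro l _
        rw [hBmval]; ring
      rw [this]; ring
    rw [hsplit]
    have h1 := hzA i hi
    have h2 := mul_nonpos_of_nonneg_of_nonpos hp0 (hzL i hi)
    linarith
  -- coefficients of z in the eigenbasis of B
  set c : Fin (n + n) → (Fin n ⊕ Fin n) → ℝ := fun i k => ∑ b, z i b * w k b with hcdef
  have hzBexp : ∀ i, (∑ k, z i k * (∑ l, Bm k l * z i l)) = ∑ k, μ k * (c i k)^2 := by
    intro i
    exact Stmt6Aux.quad_expand Bm μ w hBrep (z i)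
  have hcnorm : ∀ i ∈ I, (∑ k, (c i k)^2) = 1 := by
    intro i hi
    have h := Stmt6Aux.dot_expand univ (fun b k => w k b)
      (fun b _ b' _ => hwcomp b b') (z i) (z i)
    calc (∑ k, (c i k)^2) = ∑ k, (∑ b, z i b * w k b) * (∑ b, z i b * w k b) := by
          apply Finset.sum_congr rfl; intro k _
          rw [sq]
      _ = ∑ b, z i b * z i b := h
      _ = 1 := by rw [hzorthI i hi i hi]; simp
  have hbessel : ∀ k, (∑ i ∈ I, (c i k)^2) ≤ 1 := by
    intro k
    set T : (Fin n ⊕ Fin n) → ℝ := fun b => ∑ i ∈ I, c i k * z i b with hTdef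
    have hE2 : (∑ b, w k b * T b) = ∑ i ∈ I, (c i k)^2 := by
      calc (∑ b, w k b * T b) = ∑ b, ∑ i ∈ I, w k b * (c i k * z i b) := by
            apply Finset.sum_congr rfl; intro b _
            rw [hTdef]; exact Finset.mul_sum _ _ _
        _ = ∑ i ∈ I, ∑ b, w k b * (c i k * z i b) := Finset.sum_comm
        _ = ∑ i ∈ I, (c i k)^2 := by
            apply Finset.sum_congr rfl; intro i _
            have hterm : ∀ b, w k b * (c i k * z i b) = c i k * (z i b * w k b) := by
              intro b; ring
            rw [Finset.sum_congr rfl fun b _ => hterm b, ← Finset.mul_sum]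
            rw [sq]
    have hE3 : (∑ b, T b * T b) = ∑ i ∈ I, (c i k)^2 := by
      have h := Stmt6Aux.dot_expand I z (fun i hi i' hi' => hzorthI i hi i' hi')
        (fun i => c i k) (fun i => c i k)
      calc (∑ b, T b * T b) = ∑ i ∈ I, c i k * c i k := h
        _ = ∑ i ∈ I, (c i k)^2 := by
            apply Finset.sum_congr rfl; intro i _; rw [sq]
    have hE1 : (∑ b, w k b * w k b) = 1 := by rw [hworth k k]; simp
    have hpos : 0 ≤ ∑ b, (w k b - T b)^2 := Finset.sum_nonneg fun b _ => sq_nonneg _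
    have hexpand : (∑ b, (w k b - T b)^2)
        = (∑ b, w k b * w k b) - 2 * (∑ b, w k b * T b) + (∑ b, T b * T b) := by
      have hterm : ∀ b, (w k b - T b)^2
          = w k b * w k b - 2*(w k b * T b) + T b * T b := by intro b; ring
      rw [Finset.sum_congr rfl fun b _ => hterm b, Finset.sum_add_distrib,
        Finset.sum_sub_distrib, ← Finset.mul_sum]
    rw [hexpand, hE1, hE2, hE3] at hpos
    linarith
  -- the positive parts
  set m : (Fin n ⊕ Fin n) → ℝ := fun k => max (μ k) 0 with hmdef
  have hm0 : ∀ k, 0 ≤ m k := fun k => le_max_right _ _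
  have hkey : ∀ i ∈ I, lam i ^ 3 ≤ ∑ k, (c i k)^2 * (m k)^3 := by
    intro i hi
    have h1 : lam i ≤ ∑ k, (c i k)^2 * m k := by
      calc lam i ≤ ∑ k, z i k * (∑ l, Bm k l * z i l) := hzB i hi
        _ = ∑ k, μ k * (c i k)^2 := hzBexp i
        _ ≤ ∑ k, (c i k)^2 * m k := by
            apply Finset.sum_le_sum
            intro k _
            have hle : μ k ≤ m k := le_max_left _ _
            nlinarith [sq_nonneg (c i k)]
    have h2 : (∑ k, (c i k)^2 * m k) ^ 3 ≤ ∑ k, (c i k)^2 * (m k)^3 :=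
      Real.pow_arith_mean_le_arith_mean_pow univ (fun k => (c i k)^2) m
        (fun k _ => sq_nonneg _) (hcnorm i hi) (fun k _ => hm0 k) 3
    calc lam i ^ 3 ≤ (∑ k, (c i k)^2 * m k) ^ 3 := Stmt6Aux.cube_le h1
      _ ≤ _ := h2
  have hmain : (∑ i ∈ I, lam i ^ 3) ≤ ∑ k, (m k)^3 := by
    calc (∑ i ∈ I, lam i ^ 3) ≤ ∑ i ∈ I, ∑ k, (c i k)^2 * (m k)^3 :=
          Finset.sum_le_sum hkey
      _ = ∑ k, (∑ i ∈ I, (c i k)^2) * (m k)^3 := by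
          rw [Finset.sum_comm]
          exact Finset.sum_congr rfl fun k _ => by rw [Finset.sum_mul]
      _ ≤ ∑ k, (m k)^3 := by
          apply Finset.sum_le_sum
          intro k _
          have h3 : 0 ≤ (m k)^3 := by positivity
          nlinarith [hbessel k, h3]
  -- the witness matrix
  set X : Matrix (Fin n ⊕ Fin n) (Fin n ⊕ Fin n) ℝ :=
    Matrix.of (fun k l => ∑ j, ((1/Δ) * (m j)^2) * (w j k * w j l)) with hXdef
  have hXval : ∀ k l, X k l = ∑ j, ((1/Δ) * (m j)^2) * (w j k * w j l) := fun k l => rfl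
  have hmcube : ∀ j, (m j)^2 * μ j = (m j)^3 := by
    intro j
    rcases le_total (μ j) 0 with h | h
    · have : m j = 0 := max_eq_right h
      rw [this]; ring
    · have : m j = μ j := max_eq_left h
      rw [this]; ring
  refine ⟨X, ⟨?_, ?_⟩, ?_, ?_⟩
  · have : X.conjTranspose = X := by
      ext k l
      simp only [Matrix.conjTranspose_apply, star_trivial, hXval]
      apply Finset.sum_congr rfl; intro j _; ring
    exact this
  · suffices hpsd : ∀ x : (Fin n ⊕ Fin n) → ℝ, 0 ≤ dotProduct (star x) (X.mulVec x) by
      have hXh : X.conjTranspose = X := by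
        ext k l
        simp only [Matrix.conjTranspose_apply, star_trivial, hXval]
        apply Finset.sum_congr rfl; intro j _; ring
      exact (Matrix.posSemidef_iff_dotProduct_mulVec.mpr ⟨hXh, hpsd⟩).2
    intro x
    have hstar : star x = x := by
      funext k; simp
    rw [hstar]
    have hdot : dotProduct x (X.mulVec x) = ∑ k, x k * (∑ l, X k l * x l) := rfl
    rw [hdot, Stmt6Aux.quad_expand X (fun j => (1/Δ) * (m j)^2) w hXval x]
    apply Finset.sum_nonneg
    intro j _
    have h1 : (0:ℝ) ≤ 1/Δ := one_div_nonneg.mpr hΔ0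
    exact mul_nonneg (mul_nonneg h1 (sq_nonneg _)) (sq_nonneg _)
  · intro k
    have hmsq : ∀ j, (m j)^2 ≤ (μ j)^2 := by
      intro j
      rcases le_total (μ j) 0 with h | h
      · have : m j = 0 := max_eq_right h
        rw [this]
        simpa using sq_nonneg (μ j)
      · have : m j = μ j := max_eq_left h
        rw [this]
    calc X k k = ∑ j, ((1/Δ) * (m j)^2) * (w j k * w j k) := hXval k k
      _ ≤ ∑ j, ((1/Δ) * (μ j)^2) * (w j k * w j k) := by
          apply Finset.sum_le_sum; intro j _
          have hww : (0:ℝ) ≤ w j k * w j k := mul_self_nonneg _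
          have h1 : (1/Δ) * (m j)^2 ≤ (1/Δ) * (μ j)^2 :=
            mul_le_mul_of_nonneg_left (hmsq j) (one_div_nonneg.mpr hΔ0)
          exact mul_le_mul_of_nonneg_right h1 hww
      _ = (1/Δ) * ∑ j, (μ j)^2 * (w j k)^2 := by
          rw [Finset.mul_sum]
          apply Finset.sum_congr rfl; intro j _; ring
      _ = (1/Δ) * ∑ b, Bm k b ^ 2 := by rw [hB2diag k]
      _ ≤ (1/Δ) * Δ := mul_le_mul_of_nonneg_left (hB2 k) (one_div_nonneg.mpr hΔ0)
      _ = 1 := by field_simp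
  · have hfrobB : (∑ k, ∑ l, X k l * Bm k l)
        = frob X (symA M) - p * frob X (Lmat n) := by
      unfold _root_.frob
      rw [Finset.mul_sum, ← Finset.sum_sub_distrib]
      apply Finset.sum_congr rfl; intro k _
      rw [Finset.mul_sum, ← Finset.sum_sub_distrib]
      apply Finset.sum_congr rfl; intro l _
      rw [hBmval]; ring
    have hfrobval : (∑ k, ∑ l, X k l * Bm k l) = (1/Δ) * ∑ j, (m j)^3 := by
      calc ∑ k, ∑ l, X k l * Bm k l
          = ∑ k, ∑ l, ∑ j, ((1/Δ) * (m j)^2) * (w j k * (Bm k l * w j l)) := by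
            apply Finset.sum_congr rfl; intro k _
            apply Finset.sum_congr rfl; intro l _
            rw [hXval, Finset.sum_mul]
            apply Finset.sum_congr rfl; intro j _; ring
        _ = ∑ k, ∑ j, ∑ l, ((1/Δ) * (m j)^2) * (w j k * (Bm k l * w j l)) := by
            apply Finset.sum_congr rfl; intro k _
            rw [Finset.sum_comm]
        _ = ∑ j, ∑ k, ∑ l, ((1/Δ) * (m j)^2) * (w j k * (Bm k l * w j l)) := by
            rw [Finset.sum_comm]
        _ = ∑ j, ((1/Δ) * (m j)^2) * ∑ k, w j k * (∑ l, Bm k l * w j l) := by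
            apply Finset.sum_congr rfl; intro j _
            rw [Finset.mul_sum]
            apply Finset.sum_congr rfl; intro k _
            rw [← Finset.mul_sum, ← Finset.mul_sum]
        _ = ∑ j, ((1/Δ) * (m j)^2) * μ j := by
            apply Finset.sum_congr rfl; intro j _
            congr 1
            calc ∑ k, w j k * (∑ l, Bm k l * w j l)
                = ∑ k, w j k * (μ j * w j k) := by
                  apply Finset.sum_congr rfl; intro k _
                  rw [hweig j k]
              _ = μ j * ∑ k, w j k * w j k := by
                  rw [Finset.mul_sum]
                  apply Finset.sum_congr rfl; intro k _; ring
              _ = μ j := by rw [hworth j j]; simp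
        _ = (1/Δ) * ∑ j, (m j)^3 := by
            rw [Finset.mul_sum]
            apply Finset.sum_congr rfl; intro j _
            calc ((1/Δ) * (m j)^2) * μ j = (1/Δ) * ((m j)^2 * μ j) := by ring
              _ = (1/Δ) * (m j)^3 := by rw [hmcube j]
    have hdisc : discX M X = frob X (symA M) - p * frob X (Lmat n) := by
      unfold discX
      rw [← hpdef]
    rw [ge_iff_le, hdisc, ← hfrobB, hfrobval]
    exact mul_le_mul_of_nonneg_left hmain (one_div_nonneg.mpr hΔ0)
end

section
/- Let M ∈ {0,1}^{n×n} with rank(M) ≤ r, average degree d = |M|/n ≤ n/2, and maximum row/column degree Δ ≤ 1.1d. Then pdisc(M) ≥ d^{1/2}n^{3/2}/(7√r). -/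
open Finset
open Matrix
set_option maxHeartbeats 1600000

section Helpers

variable {m : Type*} [Fintype m] [DecidableEq m]

omit [DecidableEq m] in
lemma myRank_add_le (A B : Matrix m m ℝ) : (A + B).rank ≤ A.rank + B.rank := by
  have hle : LinearMap.range (A + B).mulVecLin ≤
      LinearMap.range A.mulVecLin ⊔ LinearMap.range B.mulVecLin := by
    rintro x ⟨v, rfl⟩
    rw [Matrix.mulVecLin_add]
    exact Submodule.mem_sup.mpr ⟨A.mulVecLin v, ⟨v, rfl⟩, B.mulVecLin v, ⟨v, rfl⟩, rfl⟩
  calc (A + B).rank ≤ Module.finrank ℝ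
        (LinearMap.range A.mulVecLin ⊔ LinearMap.range B.mulVecLin : Submodule ℝ (m → ℝ)) :=
        Submodule.finrank_mono hle
    _ ≤ A.rank + B.rank := Submodule.finrank_add_le_finrank_add_finrank _ _

lemma myRank_smul_le (c : ℝ) (A : Matrix m m ℝ) : (c • A).rank ≤ A.rank := by
  have : c • A = Matrix.diagonal (fun _ : m => c) * A := by
    ext i j; simp [Matrix.diagonal_mul]
  rw [this]
  exact Matrix.rank_mul_le_right _ _

lemma myRank_ones (n : ℕ) : (Matrix.of fun _ _ => (1 : ℝ) : Matrix (Fin n) (Fin n) ℝ).rank ≤ 1 := by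
  have hJ : (Matrix.of fun _ _ => (1 : ℝ) : Matrix (Fin n) (Fin n) ℝ) =
      (Matrix.of fun _ _ => (1 : ℝ) : Matrix (Fin n) (Fin 1) ℝ) *
      (Matrix.of fun _ _ => (1 : ℝ) : Matrix (Fin 1) (Fin n) ℝ) := by
    ext i j; simp [Matrix.mul_apply]
  rw [hJ]
  calc ((Matrix.of fun _ _ => (1 : ℝ) : Matrix (Fin n) (Fin 1) ℝ) *
      (Matrix.of fun _ _ => (1 : ℝ) : Matrix (Fin 1) (Fin n) ℝ)).rank
      ≤ (Matrix.of fun _ _ => (1 : ℝ) : Matrix (Fin n) (Fin 1) ℝ).rank :=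
        Matrix.rank_mul_le_left _ _
    _ ≤ Fintype.card (Fin 1) := Matrix.rank_le_card_width _
    _ = 1 := by simp

lemma myRank_fromBlocks {n : ℕ} (N : Matrix (Fin n) (Fin n) ℝ) :
    (Matrix.fromBlocks 0 N N.transpose 0).rank ≤ 2 * N.rank := by
  set P : Matrix (Fin n ⊕ Fin n) (Fin n ⊕ Fin n) ℝ := Matrix.fromBlocks 0 N 0 0 with hP
  have hsum : Matrix.fromBlocks 0 N N.transpose 0 = P + Pᵀ := by
    rw [hP, Matrix.fromBlocks_transpose]
    ext (i|i) (j|j) <;> simp [Matrix.fromBlocks]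
  have hPrank : P.rank ≤ N.rank := by
    have hfac : P = (Matrix.fromRows (1 : Matrix (Fin n) (Fin n) ℝ) 0) *
        (N * Matrix.fromCols 0 (1 : Matrix (Fin n) (Fin n) ℝ)) := by
      rw [Matrix.mul_fromCols, Matrix.fromRows_mul, Matrix.one_mul, Matrix.zero_mul,
        Matrix.mul_zero, Matrix.mul_one, ← Matrix.fromCols_zero,
        Matrix.fromRows_fromCols_eq_fromBlocks]
    rw [hfac]
    exact le_trans (Matrix.rank_mul_le_right _ _) (Matrix.rank_mul_le_left _ _)
  calc (Matrix.fromBlocks 0 N N.transpose 0).rank = (P + Pᵀ).rank := by rw [hsum]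
    _ ≤ P.rank + Pᵀ.rank := myRank_add_le _ _
    _ = P.rank + P.rank := by rw [Matrix.rank_transpose]
    _ ≤ N.rank + N.rank := by omega
    _ = 2 * N.rank := by omega

variable {U : Matrix m m ℝ}

lemma conj_mul_conj (hU : star U * U = 1) (g h : m → ℝ) :
    (U * Matrix.diagonal g * star U) * (U * Matrix.diagonal h * star U)
      = U * Matrix.diagonal (fun i => g i * h i) * star U := by
  have key : star U * (U * (Matrix.diagonal h * star U)) = Matrix.diagonal h * star U := by
    rw [← Matrix.mul_assoc, hU, Matrix.one_mul]
  simp only [Matrix.mul_assoc]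
  rw [key, ← Matrix.mul_assoc (Matrix.diagonal g), Matrix.diagonal_mul_diagonal]

lemma trace_conj (hU : star U * U = 1) (g : m → ℝ) :
    Matrix.trace (U * Matrix.diagonal g * star U) = ∑ i, g i := by
  rw [Matrix.trace_mul_cycle, hU, Matrix.one_mul, Matrix.trace_diagonal]

lemma conj_apply_diag (g : m → ℝ) (k : m) :
    (U * Matrix.diagonal g * star U) k k = ∑ i, g i * (U k i)^2 := by
  rw [Matrix.mul_apply]
  refine Finset.sum_congr rfl fun i _ => ?_
  rw [Matrix.mul_diagonal, Matrix.star_apply, star_trivial]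
  ring

end Helpers

/-- If `rank(M) ≤ r`, `d ≤ n/2` and `Δ ≤ 1.1d`, then `pdisc(M) ≥ d^{1/2}n^{3/2}/(7√r)`. -/
theorem stmt7 (n r : ℕ)
    (M : Matrix (Fin n) (Fin n) ℝ) (hbin : ∀ i j, M i j = 0 ∨ M i j = 1)
    (hrank : M.rank ≤ r)
    (d : ℝ) (hd : d = (∑ i, ∑ j, M i j) / n)
    (hdn : d ≤ n / 2)
    (hΔr : ∀ i, (∑ j, M i j) ≤ 1.1 * d)
    (hΔc : ∀ j, (∑ i, M i j) ≤ 1.1 * d) :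
    ∃ X : Matrix (Fin n ⊕ Fin n) (Fin n ⊕ Fin n) ℝ,
      X.PosSemidef ∧ (∀ k, X k k ≤ 1) ∧
      discX M X ≥ Real.sqrt d * (n : ℝ) * Real.sqrt n / (7 * Real.sqrt r) := by
  have hMnn : ∀ i j, (0:ℝ) ≤ M i j := by
    intro i j; rcases hbin i j with h | h <;> rw [h] <;> norm_num
  have hsumnn : (0:ℝ) ≤ ∑ i, ∑ j, M i j :=
    Finset.sum_nonneg fun i _ => Finset.sum_nonneg fun j _ => hMnn i j
  have hd0 : 0 ≤ d := by
    rw [hd]; positivity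
  -- trivial case: RHS equals zero
  by_cases htriv : Real.sqrt d * (n : ℝ) * Real.sqrt n / (7 * Real.sqrt r) ≤ 0
  · refine ⟨0, Matrix.PosSemidef.zero, fun k => by norm_num, ?_⟩
    have : discX M 0 = 0 := by simp [discX, frob]
    rw [this]; exact htriv
  push_neg at htriv
  have hn0 : 0 < (n:ℝ) := by
    rcases Nat.eq_zero_or_pos n with h | h
    · exfalso; rw [h] at htriv; simp at htriv
    · exact_mod_cast h
  have hdpos : 0 < d := by
    rcases eq_or_lt_of_le hd0 with h | h
    · exfalso; rw [← h] at htriv; simp at htriv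
    · exact h
  have hr1 : 1 ≤ r := by
    rcases Nat.eq_zero_or_pos r with h | h
    · exfalso; rw [h] at htriv; simp at htriv
    · exact h
  have hrR : (1:ℝ) ≤ (r:ℝ) := by exact_mod_cast hr1
  -- setup
  set p : ℝ := d / n with hp
  have hp0 : 0 ≤ p := by positivity
  have hphalf : p ≤ 1/2 := by
    rw [hp, div_le_iff₀ hn0]; linarith
  have hn' : (n:ℝ) ≠ 0 := ne_of_gt hn0
  have hMsum : (∑ i, ∑ j, M i j) = d * n := by
    rw [hd]; field_simp
  set J : Matrix (Fin n) (Fin n) ℝ := Matrix.of (fun _ _ => (1:ℝ)) with hJ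
  set N : Matrix (Fin n) (Fin n) ℝ := M - p • J with hN
  set B : Matrix (Fin n ⊕ Fin n) (Fin n ⊕ Fin n) ℝ := symA N with hBdef
  have hNapp : ∀ i j, N i j = M i j - p := by
    intro i j; simp [hN, hJ]
  have hBentry : ∀ k l, B k l = symA M k l - p * Lmat n k l := by
    rintro (i|i) (j|j) <;>
      simp [hBdef, symA, Lmat, Matrix.fromBlocks, hNapp] <;> ring
  have hdens : dens M = p := by
    unfold _root_.dens; rw [hMsum, hp]
    field_simp
  have hdisc : ∀ X, discX M X = frob X B := by
    intro X
    unfold discX frob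
    rw [hdens, Finset.mul_sum, ← Finset.sum_sub_distrib]
    refine Finset.sum_congr rfl fun k _ => ?_
    rw [Finset.mul_sum, ← Finset.sum_sub_distrib]
    refine Finset.sum_congr rfl fun l _ => ?_
    rw [hBentry k l]; ring
  -- B is symmetric
  have hB : B.IsHermitian := by
    show Bᴴ = B
    ext (i|i) (j|j) <;>
      simp [hBdef, symA, Matrix.conjTranspose_apply, Matrix.fromBlocks]
  obtain ⟨U, lam, hU1, hspec, heigs⟩ :
      ∃ (U : Matrix (Fin n ⊕ Fin n) (Fin n ⊕ Fin n) ℝ) (lam : (Fin n ⊕ Fin n) → ℝ),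
        star U * U = 1 ∧ B = U * Matrix.diagonal lam * star U ∧
        B.rank = (Finset.univ.filter (fun i => lam i ≠ 0)).card := by
    refine ⟨(hB.eigenvectorUnitary : Matrix (Fin n ⊕ Fin n) (Fin n ⊕ Fin n) ℝ), hB.eigenvalues,
      (Unitary.mem_iff.mp hB.eigenvectorUnitary.2).1, ?_, ?_⟩
    · have h := hB.spectral_theorem
      rwa [RCLike.ofReal_real_eq_id, Function.id_comp] at h
    · rw [hB.rank_eq_card_non_zero_eigs, Fintype.card_subtype]
  -- block form of B * B
  have hBBblocks : B * B = Matrix.fromBlocks (N * Nᵀ) 0 0 (Nᵀ * N) := by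
    show symA N * symA N = _
    simp [symA, Matrix.fromBlocks_multiply]
  have hBB : B * B = U * Matrix.diagonal (fun i => lam i ^ 2) * star U := by
    rw [hspec, conj_mul_conj hU1]
    simp [pow_two]
  -- T = sum of squared eigenvalues
  set T : ℝ := ∑ i, lam i ^ 2 with hT
  have htrBB : Matrix.trace (B * B) = T := by rw [hBB, trace_conj hU1]
  have hsq_pt : ∀ i j, N i j * N i j = (1 - 2*p) * M i j + p^2 := by
    intro i j
    rcases hbin i j with h | h <;> rw [hNapp i j, h] <;> ring
  have hrow : ∀ i, ∑ j, N i j * N i j = (1 - 2*p) * (∑ j, M i j) + n * p^2 := by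
    intro i
    calc ∑ j, N i j * N i j = ∑ j, ((1 - 2*p) * M i j + p^2) :=
          Finset.sum_congr rfl fun j _ => hsq_pt i j
      _ = (1 - 2*p) * (∑ j, M i j) + n * p^2 := by
          rw [Finset.sum_add_distrib, ← Finset.mul_sum]
          simp [mul_comm]
  have hcol : ∀ j, ∑ i, N i j * N i j = (1 - 2*p) * (∑ i, M i j) + n * p^2 := by
    intro j
    calc ∑ i, N i j * N i j = ∑ i, ((1 - 2*p) * M i j + p^2) :=
          Finset.sum_congr rfl fun i _ => hsq_pt i j
      _ = (1 - 2*p) * (∑ i, M i j) + n * p^2 := by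
          rw [Finset.sum_add_distrib, ← Finset.mul_sum]
          simp [mul_comm]
  have hnp2 : (n:ℝ) * p^2 = p * d := by
    rw [hp]; field_simp
  have hrowB : ∀ i, ∑ j, N i j * N i j ≤ 8/5 * d := by
    intro i
    rw [hrow i, hnp2]
    have h1 : (1 - 2*p) * (∑ j, M i j) ≤ (∑ j, M i j) := by
      apply mul_le_of_le_one_left
      · exact Finset.sum_nonneg fun j _ => hMnn i j
      · linarith
    have h2 := hΔr i
    have h3 : p * d ≤ 1/2 * d := by nlinarith
    have h11 : (1.1:ℝ) = 11/10 := by norm_num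
    rw [h11] at h2
    linarith
  have hcolB : ∀ j, ∑ i, N i j * N i j ≤ 8/5 * d := by
    intro j
    rw [hcol j, hnp2]
    have h1 : (1 - 2*p) * (∑ i, M i j) ≤ (∑ i, M i j) := by
      apply mul_le_of_le_one_left
      · exact Finset.sum_nonneg fun i _ => hMnn i j
      · linarith
    have h2 := hΔc j
    have h3 : p * d ≤ 1/2 * d := by nlinarith
    have h11 : (1.1:ℝ) = 11/10 := by norm_num
    rw [h11] at h2
    linarith
  -- trace of B*B via entries
  have htrBB2 : Matrix.trace (B * B) = 2 * ∑ i, ∑ j, N i j * N i j := by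
    rw [hBBblocks]
    have e1 : ∀ i, (N * Nᵀ) i i = ∑ j, N i j * N i j := by
      intro i; simp [Matrix.mul_apply]
    have e2 : ∀ j, (Nᵀ * N) j j = ∑ i, N i j * N i j := by
      intro j; simp [Matrix.mul_apply]
    calc Matrix.trace (Matrix.fromBlocks (N * Nᵀ) 0 0 (Nᵀ * N))
        = (∑ i, (N * Nᵀ) i i) + (∑ j, (Nᵀ * N) j j) := by
          simp [Matrix.trace, Matrix.diag, Fintype.sum_sum_type]
      _ = (∑ i, ∑ j, N i j * N i j) + (∑ j, ∑ i, N i j * N i j) := by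
          rw [Finset.sum_congr rfl fun i _ => e1 i, Finset.sum_congr rfl fun j _ => e2 j]
      _ = 2 * ∑ i, ∑ j, N i j * N i j := by
          rw [Finset.sum_comm]; ring
  have hS2 : ∑ i, ∑ j, N i j * N i j = d * n - d^2 := by
    calc ∑ i, ∑ j, N i j * N i j
        = ∑ i, ((1 - 2*p) * (∑ j, M i j) + n * p^2) :=
          Finset.sum_congr rfl fun i _ => hrow i
      _ = (1 - 2*p) * (∑ i, ∑ j, M i j) + n * (n * p^2) := by
          rw [Finset.sum_add_distrib, ← Finset.mul_sum]
          simp [mul_comm]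
      _ = d * n - d^2 := by
          rw [hMsum, hnp2, hp]; field_simp; ring
  have hTval : T = 2 * (d * n - d^2) := by rw [← htrBB, htrBB2, hS2]
  have hTlb : d * n ≤ T := by rw [hTval]; nlinarith
  have hT0 : 0 < T := lt_of_lt_of_le (by positivity) hTlb
  -- trace of B^3 is zero
  have htrB3 : Matrix.trace (B * B * B) = 0 := by
    rw [hBBblocks]
    have : Matrix.fromBlocks (N * Nᵀ) 0 0 (Nᵀ * N) * B
        = Matrix.fromBlocks 0 (N * Nᵀ * N) (Nᵀ * N * Nᵀ) 0 := by
      show _ * symA N = _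
      simp [symA, Matrix.fromBlocks_multiply, Matrix.mul_assoc]
    rw [this]
    simp [Matrix.trace, Matrix.diag, Fintype.sum_sum_type, Matrix.fromBlocks]
  have hsum3 : ∑ i, lam i ^ 3 = 0 := by
    have h3 : B * B * B = U * Matrix.diagonal (fun i => lam i ^ 2 * lam i) * star U := by
      rw [hBB]
      nth_rewrite 1 [hspec]
      rw [conj_mul_conj hU1]
    have h4 := htrB3
    rw [h3, trace_conj hU1] at h4
    have e : ∑ i, lam i ^ 3 = ∑ i, lam i ^ 2 * lam i :=
      Finset.sum_congr rfl fun i _ => by ring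
    rw [e, h4]
  -- the candidate X
  set cc : ℝ := 5 / (8 * d) with hcc
  have hccpos : 0 < cc := by rw [hcc]; positivity
  set w : (Fin n ⊕ Fin n) → ℝ := fun i => cc * (if 0 < lam i then lam i ^ 2 else 0) with hw
  have hwnn : ∀ i, 0 ≤ w i := by
    intro i
    show 0 ≤ cc * (if 0 < lam i then lam i ^ 2 else 0)
    have h : (0:ℝ) ≤ if 0 < lam i then lam i ^ 2 else 0 := by
      split
      · exact sq_nonneg _
      · exact le_refl _
    exact mul_nonneg hccpos.le h
  have hwle : ∀ i, w i ≤ cc * lam i ^ 2 := by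
    intro i
    show cc * (if 0 < lam i then lam i ^ 2 else 0) ≤ cc * lam i ^ 2
    have h : (if 0 < lam i then lam i ^ 2 else 0) ≤ lam i ^ 2 := by
      split
      · exact le_refl _
      · exact sq_nonneg _
    exact mul_le_mul_of_nonneg_left h hccpos.le
  clear_value cc w
  set X : Matrix (Fin n ⊕ Fin n) (Fin n ⊕ Fin n) ℝ := U * Matrix.diagonal w * star U with hX
  clear_value X
  -- X is PSD
  have hXpsd : X.PosSemidef := by
    have hstar : (star fun i => Real.sqrt (w i)) = fun i => Real.sqrt (w i) := by
      funext i; simp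
    have hmm : (fun i => Real.sqrt (w i) * Real.sqrt (w i)) = w := by
      funext i; exact Real.mul_self_sqrt (hwnn i)
    have hfac : X = (U * Matrix.diagonal (fun i => Real.sqrt (w i))) *
        (U * Matrix.diagonal (fun i => Real.sqrt (w i)))ᴴ := by
      rw [Matrix.conjTranspose_mul, Matrix.diagonal_conjTranspose, hstar,
        ← Matrix.star_eq_conjTranspose]
      calc X = U * Matrix.diagonal w * star U := hX
        _ = U * (Matrix.diagonal (fun i => Real.sqrt (w i)) *
              Matrix.diagonal (fun i => Real.sqrt (w i))) * star U := by
            rw [Matrix.diagonal_mul_diagonal, hmm]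
        _ = U * Matrix.diagonal (fun i => Real.sqrt (w i)) *
              (Matrix.diagonal (fun i => Real.sqrt (w i)) * star U) := by
            simp only [Matrix.mul_assoc]
    rw [hfac]
    exact Matrix.posSemidef_self_mul_conjTranspose _
  -- diagonal entries of X are at most 1
  have hXdiag : ∀ k, X k k ≤ 1 := by
    intro k
    have h1 : X k k = ∑ i, w i * (U k i)^2 := by
      rw [hX]; exact conj_apply_diag w k
    have h2 : (B * B) k k = ∑ i, lam i ^ 2 * (U k i)^2 := by
      rw [hBB]; exact conj_apply_diag _ k
    have h3 : X k k ≤ cc * (B * B) k k := by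
      rw [h1, h2, Finset.mul_sum]
      refine Finset.sum_le_sum fun i _ => ?_
      calc w i * (U k i)^2 ≤ (cc * lam i ^ 2) * (U k i)^2 :=
            mul_le_mul_of_nonneg_right (hwle i) (sq_nonneg _)
        _ = cc * (lam i ^ 2 * (U k i)^2) := mul_assoc cc (lam i ^ 2) ((U k i)^2)
    have h4 : (B * B) k k ≤ 8/5 * d := by
      rw [hBBblocks]
      match k with
      | Sum.inl i =>
        have : (Matrix.fromBlocks (N * Nᵀ) 0 0 (Nᵀ * N)) (Sum.inl i) (Sum.inl i)
            = ∑ j, N i j * N i j := by simp [Matrix.mul_apply]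
        rw [this]; exact hrowB i
      | Sum.inr j =>
        have : (Matrix.fromBlocks (N * Nᵀ) 0 0 (Nᵀ * N)) (Sum.inr j) (Sum.inr j)
            = ∑ i, N i j * N i j := by simp [Matrix.mul_apply]
        rw [this]; exact hcolB j
    have h5 : cc * (8/5 * d) = 1 := by
      rw [hcc]; field_simp
    calc X k k ≤ cc * (B * B) k k := h3
      _ ≤ cc * (8/5 * d) := mul_le_mul_of_nonneg_left h4 hccpos.le
      _ = 1 := h5
  -- value of the SDP
  set Ppos : ℝ := ∑ i, (if 0 < lam i then lam i ^ 3 else 0) with hPpos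
  have hPposnn : 0 ≤ Ppos := by
    refine Finset.sum_nonneg fun i _ => ?_
    split
    · positivity
    · exact le_refl _
  have hval : discX M X = cc * Ppos := by
    rw [hdisc X]
    have hfrob : frob X B = Matrix.trace (X * B) := by
      unfold frob Matrix.trace
      simp only [Matrix.diag, Matrix.mul_apply]
      refine Finset.sum_congr rfl fun k _ => ?_
      refine Finset.sum_congr rfl fun l _ => ?_
      have : B l k = B k l := by
        conv_lhs => rw [← hB]
        simp [Matrix.conjTranspose_apply]
      rw [this]
    have hXB : X * B = U * Matrix.diagonal (fun i => w i * lam i) * star U := by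
      rw [hX, hspec, conj_mul_conj hU1]
    have e : ∀ i, w i * lam i = cc * (if 0 < lam i then lam i ^ 3 else 0) := by
      intro i
      simp only [hw]
      by_cases h : 0 < lam i
      · rw [if_pos h, if_pos h]; ring
      · rw [if_neg h, if_neg h]; ring
    rw [hfrob, hXB, trace_conj hU1, hPpos, Finset.mul_sum]
    exact Finset.sum_congr rfl fun i _ => e i
  -- eigenvalue counting
  set S : Finset (Fin n ⊕ Fin n) := Finset.univ.filter (fun i => lam i ≠ 0) with hS
  have hcard : (S.card : ℝ) ≤ 4 * r := by
    have h1 : B.rank = S.card := heigs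
    have h2 : B.rank ≤ 2 * N.rank := by
      rw [hBdef]; exact myRank_fromBlocks N
    have h3 : N.rank ≤ r + 1 := by
      have hNalt : N = M + (-p) • J := by
        rw [hN]; ext i j; simp; ring
      calc N.rank = (M + (-p) • J).rank := by rw [hNalt]
        _ ≤ M.rank + ((-p) • J).rank := myRank_add_le _ _
        _ ≤ M.rank + J.rank := by
            have := myRank_smul_le (-p) J
            omega
        _ ≤ r + 1 := by
            have := myRank_ones n
            rw [hJ]
            omega
    have h4 : S.card ≤ 4 * r := by omega
    exact_mod_cast h4
  -- Cauchy-Schwarz steps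
  set A1 : ℝ := ∑ i, |lam i| with hA1
  have hA1nn : 0 ≤ A1 := Finset.sum_nonneg fun i _ => abs_nonneg _
  have habs3 : ∑ i, |lam i|^3 = 2 * Ppos := by
    have hpt : ∀ i, |lam i|^3 = 2 * (if 0 < lam i then lam i ^ 3 else 0) - lam i ^ 3 := by
      intro i
      rcases lt_trichotomy (lam i) 0 with h | h | h
      · rw [abs_of_neg h, if_neg (by linarith)]; ring
      · rw [h]; simp
      · rw [abs_of_pos h, if_pos h]; ring
    calc ∑ i, |lam i|^3 = ∑ i, (2 * (if 0 < lam i then lam i ^ 3 else 0) - lam i ^ 3) :=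
          Finset.sum_congr rfl fun i _ => hpt i
      _ = 2 * Ppos - ∑ i, lam i ^ 3 := by
          rw [Finset.sum_sub_distrib, ← Finset.mul_sum, hPpos]
      _ = 2 * Ppos := by rw [hsum3]; ring
  have hCS1 : T^2 ≤ A1 * (2 * Ppos) := by
    have h := Finset.sum_mul_sq_le_sq_mul_sq Finset.univ
      (fun i => Real.sqrt |lam i|) (fun i => |lam i| * Real.sqrt |lam i|)
    have e1 : ∀ i, Real.sqrt |lam i| * (|lam i| * Real.sqrt |lam i|) = lam i ^ 2 := by
      intro i
      have : Real.sqrt |lam i| * Real.sqrt |lam i| = |lam i| := Real.mul_self_sqrt (abs_nonneg _)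
      calc Real.sqrt |lam i| * (|lam i| * Real.sqrt |lam i|)
          = (Real.sqrt |lam i| * Real.sqrt |lam i|) * |lam i| := by ring
        _ = |lam i| * |lam i| := by rw [this]
        _ = lam i ^ 2 := by rw [← abs_mul, abs_mul_self]; ring
    have e2 : ∀ i, (Real.sqrt |lam i|) ^ 2 = |lam i| := fun i => Real.sq_sqrt (abs_nonneg _)
    have e3 : ∀ i, (|lam i| * Real.sqrt |lam i|) ^ 2 = |lam i| ^ 3 := by
      intro i
      rw [mul_pow, Real.sq_sqrt (abs_nonneg _)]
      ring
    rw [Finset.sum_congr rfl fun i _ => e1 i, Finset.sum_congr rfl fun i _ => e2 i,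
      Finset.sum_congr rfl fun i _ => e3 i, habs3] at h
    exact h
  have hCS2 : A1^2 ≤ (S.card : ℝ) * T := by
    have hA1S : A1 = ∑ i ∈ S, |lam i| := by
      rw [hA1, hS]
      rw [Finset.sum_filter_of_ne]
      intro i _ h
      intro hc
      exact h (by rw [hc]; simp)
    have h := Finset.sum_mul_sq_le_sq_mul_sq S (fun _ => (1:ℝ)) (fun i => |lam i|)
    simp only [one_mul, one_pow] at h
    have hsum1 : ∑ _i ∈ S, (1:ℝ) = (S.card : ℝ) := by simp
    have hsub : ∑ i ∈ S, |lam i| ^ 2 ≤ T := by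
      rw [hT]
      have : ∀ i, |lam i|^2 = lam i ^2 := fun i => sq_abs _
      rw [Finset.sum_congr rfl fun i _ => this i]
      exact Finset.sum_le_sum_of_subset_of_nonneg (Finset.filter_subset _ _)
        (fun i _ _ => sq_nonneg _)
    calc A1^2 = (∑ i ∈ S, |lam i|)^2 := by rw [hA1S]
      _ ≤ (∑ _i ∈ S, (1:ℝ)) * ∑ i ∈ S, |lam i| ^ 2 := h
      _ ≤ (S.card : ℝ) * T := by
          rw [hsum1]
          exact mul_le_mul_of_nonneg_left hsub (Nat.cast_nonneg _)
  -- combine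
  have hsT : Real.sqrt T > 0 := Real.sqrt_pos.mpr hT0
  have hsr : Real.sqrt r > 0 := Real.sqrt_pos.mpr (by linarith)
  have hA1le : A1 ≤ 2 * Real.sqrt r * Real.sqrt T := by
    have hsq : A1^2 ≤ (2 * Real.sqrt r * Real.sqrt T)^2 := by
      have : (2 * Real.sqrt r * Real.sqrt T)^2 = 4 * r * T := by
        rw [mul_pow, mul_pow, Real.sq_sqrt (by positivity : (0:ℝ) ≤ (r:ℝ)),
          Real.sq_sqrt hT0.le]
        ring
      rw [this]
      calc A1^2 ≤ (S.card : ℝ) * T := hCS2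
        _ ≤ 4 * r * T := mul_le_mul_of_nonneg_right hcard hT0.le
    calc A1 = Real.sqrt (A1^2) := (Real.sqrt_sq hA1nn).symm
      _ ≤ Real.sqrt ((2 * Real.sqrt r * Real.sqrt T)^2) := Real.sqrt_le_sqrt hsq
      _ = 2 * Real.sqrt r * Real.sqrt T := Real.sqrt_sq (by positivity)
  have hkey : T * Real.sqrt T ≤ 4 * Real.sqrt r * Ppos := by
    have h1 : T^2 ≤ (2 * Real.sqrt r * Real.sqrt T) * (2 * Ppos) := by
      calc T^2 ≤ A1 * (2 * Ppos) := hCS1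
        _ ≤ (2 * Real.sqrt r * Real.sqrt T) * (2 * Ppos) :=
            mul_le_mul_of_nonneg_right hA1le (by linarith)
    have hTsq : Real.sqrt T * Real.sqrt T = T := Real.mul_self_sqrt hT0.le
    have h2 : (T * Real.sqrt T) * Real.sqrt T ≤ (4 * Real.sqrt r * Ppos) * Real.sqrt T := by
      calc (T * Real.sqrt T) * Real.sqrt T = T * (Real.sqrt T * Real.sqrt T) := by ring
        _ = T^2 := by rw [hTsq]; ring
        _ ≤ (2 * Real.sqrt r * Real.sqrt T) * (2 * Ppos) := h1
        _ = (4 * Real.sqrt r * Ppos) * Real.sqrt T := by ring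
    exact le_of_mul_le_mul_right h2 hsT
  -- lower bound T * sqrt T
  have hsdn : Real.sqrt (d * n) = Real.sqrt d * Real.sqrt n := Real.sqrt_mul hd0 _
  have hTT : d * n * (Real.sqrt d * Real.sqrt n) ≤ T * Real.sqrt T := by
    have h1 : Real.sqrt (d * n) ≤ Real.sqrt T := Real.sqrt_le_sqrt hTlb
    rw [← hsdn]
    have hdn0 : (0:ℝ) ≤ d * n := by positivity
    exact mul_le_mul hTlb h1 (Real.sqrt_nonneg _) hT0.le
  have hfinal : d * n * (Real.sqrt d * Real.sqrt n) ≤ 4 * Real.sqrt r * Ppos :=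
    le_trans hTT hkey
  -- conclusion
  refine ⟨X, hXpsd, hXdiag, ?_⟩
  rw [hval, ge_iff_le, div_le_iff₀ (by positivity)]
  -- goal: sqrt d * n * sqrt n ≤ cc * Ppos * (7 * sqrt r)
  have hccd : cc * d = 5/8 := by rw [hcc]; field_simp
  have hY : 0 ≤ cc * Real.sqrt r * Ppos :=
    mul_nonneg (mul_nonneg hccpos.le hsr.le) hPposnn
  calc Real.sqrt d * n * Real.sqrt n
      = (8/5) * (5/8 * ((n:ℝ) * (Real.sqrt d * Real.sqrt n))) := by ring
    _ ≤ (8/5) * (4 * (cc * Real.sqrt r * Ppos)) := by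
        refine mul_le_mul_of_nonneg_left ?_ (by norm_num)
        calc 5/8 * ((n:ℝ) * (Real.sqrt d * Real.sqrt n))
            = cc * d * ((n:ℝ) * (Real.sqrt d * Real.sqrt n)) := by rw [hccd]
          _ = cc * (d * n * (Real.sqrt d * Real.sqrt n)) := by ring
          _ ≤ cc * (4 * Real.sqrt r * Ppos) := mul_le_mul_of_nonneg_left hfinal hccpos.le
          _ = 4 * (cc * Real.sqrt r * Ppos) := by ring
    _ = 32/5 * (cc * Real.sqrt r * Ppos) := by ring
    _ ≤ 7 * (cc * Real.sqrt r * Ppos) :=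
        mul_le_mul_of_nonneg_right (by norm_num) hY
    _ = cc * Ppos * (7 * Real.sqrt r) := by ring
end
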